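/- For any real 3×3 matrix K, the value max_{S ∈ SO(3)} tr(K·S) depends only on the singular values of K together with the sign of det K; in particular it is uniquely determined by K. -/

import Mathlib

/-!
Write `D = diagonal σ`. Cyclicity of the trace gives `tr (U D Vᵀ S) = tr (D (Vᵀ S U))`, and
`S ↦ Vᵀ S U` maps `SO(3)` bijectively onto the orthogonal matrices of determinant
`ε = det (U Vᵀ) = ±1`, so the set of values depends only on `σ` and `ε`. For a second
decomposition with `ε' = -ε` we get `det K' = -det K`, so equal signs force `det K = 0`, i.e.
some `σ j = 0`. Then the reflection in the `j`-th coordinate has determinant `-1` and fixes `D`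
under right multiplication, so it identifies the values over the two cosets of `SO(3)`.
-/

open Matrix

def SO3 (S : Matrix (Fin 3) (Fin 3) ℝ) : Prop :=
  S ∈ Matrix.orthogonalGroup (Fin 3) ℝ ∧ S.det = 1

section OrthogonalTraceValues

variable {n : Type*} [Fintype n] [DecidableEq n]

lemma transpose_mem_orthogonalGroup {U : Matrix n n ℝ} (hU : U ∈ orthogonalGroup n ℝ) :
    Uᵀ ∈ orthogonalGroup n ℝ := by
  simpa [star_eq_conjTranspose] using Unitary.star_mem hU

lemma det_mul_self_of_mem_orthogonalGroup {U : Matrix n n ℝ} (hU : U ∈ orthogonalGroup n ℝ) :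
    U.det * U.det = 1 := by
  simpa using (det_of_mem_unitary hU).2

def orthogonalTraceValues (A : Matrix n n ℝ) (ε : ℝ) : Set ℝ :=
  {t | ∃ T ∈ orthogonalGroup n ℝ, T.det = ε ∧ t = trace (A * T)}

lemma orthogonalTraceValues_mul_right {A W : Matrix n n ℝ} (hW : W ∈ orthogonalGroup n ℝ)
    (ε : ℝ) : orthogonalTraceValues (A * W) ε = orthogonalTraceValues A (W.det * ε) := by
  ext t
  constructor
  · rintro ⟨T, hT, rfl, rfl⟩
    exact ⟨W * T, mul_mem hW hT, det_mul _ _, by rw [mul_assoc]⟩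
  · rintro ⟨T, hT, hdet, rfl⟩
    refine ⟨Wᵀ * T, mul_mem (transpose_mem_orthogonalGroup hW) hT, ?_, ?_⟩
    · rw [det_mul, det_transpose, hdet, ← mul_assoc, det_mul_self_of_mem_orthogonalGroup hW,
        one_mul]
    · rw [mul_assoc, ← mul_assoc W, (mem_orthogonalGroup_iff n ℝ).mp hW, one_mul]

lemma orthogonalTraceValues_mul_left {U A : Matrix n n ℝ} (hU : U ∈ orthogonalGroup n ℝ)
    (ε : ℝ) : orthogonalTraceValues (U * A) ε = orthogonalTraceValues A (U.det * ε) := by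
  ext t
  constructor
  · rintro ⟨T, hT, rfl, rfl⟩
    refine ⟨T * U, mul_mem hT hU, by rw [det_mul, mul_comm], ?_⟩
    rw [mul_assoc, trace_mul_comm, mul_assoc]
  · rintro ⟨T, hT, hdet, rfl⟩
    refine ⟨T * Uᵀ, mul_mem hT (transpose_mem_orthogonalGroup hU), ?_, ?_⟩
    · rw [det_mul, det_transpose, hdet, mul_right_comm, det_mul_self_of_mem_orthogonalGroup hU,
        one_mul]
    · rw [mul_assoc, trace_mul_comm U, mul_assoc, mul_assoc, (mem_orthogonalGroup_iff' n ℝ).mp hU,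
        mul_one]

lemma orthogonalTraceValues_mul_mul_transpose {U A V : Matrix n n ℝ}
    (hU : U ∈ orthogonalGroup n ℝ) (hV : V ∈ orthogonalGroup n ℝ) (ε : ℝ) :
    orthogonalTraceValues (U * A * Vᵀ) ε = orthogonalTraceValues A ((U * Vᵀ).det * ε) := by
  rw [orthogonalTraceValues_mul_right (transpose_mem_orthogonalGroup hV),
    orthogonalTraceValues_mul_left hU, det_mul, mul_assoc]

lemma orthogonalTraceValues_neg_of_mul_eq_self {A R : Matrix n n ℝ}
    (hR : R ∈ orthogonalGroup n ℝ) (hRdet : R.det = -1) (hAR : A * R = A) (ε : ℝ) :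
    orthogonalTraceValues A (-ε) = orthogonalTraceValues A ε := by
  conv_rhs => rw [← hAR, orthogonalTraceValues_mul_right hR, hRdet, neg_one_mul]

lemma orthogonalTraceValues_diagonal_neg {σ : n → ℝ} {j : n} (hj : σ j = 0) (ε : ℝ) :
    orthogonalTraceValues (diagonal σ) (-ε) = orthogonalTraceValues (diagonal σ) ε := by
  set s : n → ℝ := Function.update 1 j (-1)
  have hss : diagonal s * diagonal s = 1 := by
    rw [diagonal_mul_diagonal, ← diagonal_one]
    congr 1
    ext i
    by_cases hi : i = j <;> simp [s, hi]
  have hσs : diagonal σ * diagonal s = diagonal σ := by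
    rw [diagonal_mul_diagonal]
    congr 1
    ext i
    by_cases hi : i = j <;> simp [s, hi, hj]
  refine orthogonalTraceValues_neg_of_mul_eq_self ?_ ?_ hσs ε
  · rw [mem_orthogonalGroup_iff, diagonal_transpose, hss]
  · rw [det_diagonal, Finset.prod_update_of_mem (Finset.mem_univ j)]
    simp

end OrthogonalTraceValues

lemma setOf_SO3_trace_eq (K : Matrix (Fin 3) (Fin 3) ℝ) :
    {t : ℝ | ∃ S, SO3 S ∧ t = trace (K * S)} = orthogonalTraceValues K 1 := by
  ext t
  simp only [SO3, orthogonalTraceValues, Set.mem_ofPred_eq, and_assoc]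

theorem procrustes_value_unique_general
    (K K' U V U' V' : Matrix (Fin 3) (Fin 3) ℝ) (σ : Fin 3 → ℝ)
    (hU : U ∈ Matrix.orthogonalGroup (Fin 3) ℝ)
    (hV : V ∈ Matrix.orthogonalGroup (Fin 3) ℝ)
    (hU' : U' ∈ Matrix.orthogonalGroup (Fin 3) ℝ)
    (hV' : V' ∈ Matrix.orthogonalGroup (Fin 3) ℝ)
    (hK : K = U * Matrix.diagonal σ * Vᵀ)
    (hK' : K' = U' * Matrix.diagonal σ * V'ᵀ)
    (hdet : Real.sign K.det = Real.sign K'.det) :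
    sSup {t : ℝ | ∃ S, SO3 S ∧ t = Matrix.trace (K * S)} =
      sSup {t : ℝ | ∃ S, SO3 S ∧ t = Matrix.trace (K' * S)} := by
  have hε : (U * Vᵀ).det * (U * Vᵀ).det = 1 :=
    det_mul_self_of_mem_orthogonalGroup (mul_mem hU (transpose_mem_orthogonalGroup hV))
  have hε' : (U' * V'ᵀ).det * (U' * V'ᵀ).det = 1 :=
    det_mul_self_of_mem_orthogonalGroup (mul_mem hU' (transpose_mem_orthogonalGroup hV'))
  rw [setOf_SO3_trace_eq, setOf_SO3_trace_eq, hK, hK',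
    orthogonalTraceValues_mul_mul_transpose hU hV,
    orthogonalTraceValues_mul_mul_transpose hU' hV', mul_one, mul_one]
  obtain hsame | hflip := mul_self_eq_mul_self_iff.mp (hε'.trans hε.symm)
  · rw [hsame]
  · have hdet_factor : ∀ U V : Matrix (Fin 3) (Fin 3) ℝ,
        (U * diagonal σ * Vᵀ).det = (U * Vᵀ).det * (diagonal σ).det := by
      intro U V
      rw [det_mul, det_mul, det_mul]
      ring
    rw [hK, hK', hdet_factor, hdet_factor, hflip, neg_mul, Real.sign_neg] at hdet
    have hsing : (U * Vᵀ).det * (diagonal σ).det = 0 :=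
      Real.sign_eq_zero_iff.mp (by linarith)
    obtain ⟨j, -, hj⟩ : ∃ j ∈ Finset.univ, σ j = 0 := by
      rw [← Finset.prod_eq_zero_iff, ← det_diagonal]
      exact (mul_eq_zero.mp hsing).resolve_left (left_ne_zero_of_mul_eq_one hε)
    rw [hflip, orthogonalTraceValues_diagonal_neg hj]

/-- The maximum of `tr (K * S)` over `S ∈ SO(3)` depends only on the singular
values of `K` together with the sign of `det K`; in particular it is uniquely
determined by `K`. -/
theorem procrustes_value_unique
    (K K' U V U' V' : Matrix (Fin 3) (Fin 3) ℝ) (σ : Fin 3 → ℝ)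
    (hU : U ∈ Matrix.orthogonalGroup (Fin 3) ℝ)
    (hV : V ∈ Matrix.orthogonalGroup (Fin 3) ℝ)
    (hU' : U' ∈ Matrix.orthogonalGroup (Fin 3) ℝ)
    (hV' : V' ∈ Matrix.orthogonalGroup (Fin 3) ℝ)
    (hσ : ∀ i, 0 ≤ σ i)
    (hK : K = U * Matrix.diagonal σ * Vᵀ)
    (hK' : K' = U' * Matrix.diagonal σ * V'ᵀ)
    (hdet : Real.sign K.det = Real.sign K'.det) :
    sSup {t : ℝ | ∃ S, SO3 S ∧ t = Matrix.trace (K * S)} =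
      sSup {t : ℝ | ∃ S, SO3 S ∧ t = Matrix.trace (K' * S)} :=
  procrustes_value_unique_general K K' U V U' V' σ hU hV hU' hV' hK hK' hdet
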